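/- Let r_1, r_2 ≥ 2 and q_1, q_2 ≥ 1 with q_1 coprime to r_2 and q_2 coprime to r_1. Then: (a) if f = (f_1, f_2) : ℤ → ZMod r_1 × ZMod r_2 is a polyfractal function that is q_1·q_2-periodic, then the component f_1 : ℤ → ZMod r_1 is q_1-periodic and the component f_2 : ℤ → ZMod r_2 is q_2-periodic; (b) conversely, for every q_1-periodic polyfractal function g_1 : ℤ → ZMod r_1 and every q_2-periodic polyfractal function g_2 : ℤ → ZMod r_2, the function x ↦ (g_1(x), g_2(x)) is a q_1·q_2-periodic polyfractal function ℤ → ZMod r_1 × ZMod r_2. -/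

import Mathlib

/-- The integer binomial coefficient `binom(x,δ) = x(x-1)⋯(x-δ+1)/δ!`. -/
noncomputable def ibinom (x : ℤ) (δ : ℕ) : ℤ := Ring.choose x δ

/-!
A polyfractal map is killed by a power of the forward difference `Δ = Δ_[1]`, since
`Δ binom(·, δ + 1) = binom(·, δ)`. If such an `f` is `m q`-periodic, then `g = Δ_[q] f` is again
killed by a power of `Δ`, and `∑_{i < m} g (x + i q) = f (x + m q) - f x = 0` telescopes. Inducting
on the power of `Δ` that kills `g`: `Δ g` inherits both properties, so `Δ g = 0`; then `g` is
constant and `m • g = 0`, so `g = 0` as soon as `m` acts injectively. On `ZMod r₁` the factor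
`m = q₂` is a unit by coprimality, and symmetrically for `ZMod r₂`. The converse direction only
uses that polyfractal maps are stable under sums and under composition with additive maps.
-/

open Function Finset
open scoped fwdDiff

lemma fwdDiff_iter_fwdDiff_comm {M G : Type*} [AddCommMonoid M] [AddCommGroup G]
    (h h' : M) (f : M → G) (n : ℕ) :
    (Δ_[h])^[n] (Δ_[h'] f) = Δ_[h'] ((Δ_[h])^[n] f) := by
  ext y
  simp [fwdDiff_iter_eq_sum_shift, fwdDiff, smul_sub, add_right_comm]

lemma fwdDiff_zero {M G : Type*} [AddCommMonoid M] [AddCommGroup G] (h : M) :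
    Δ_[h] (0 : M → G) = 0 :=
  fwdDiff_const h 0

lemma fwdDiff_iter_zero {M G : Type*} [AddCommMonoid M] [AddCommGroup G] (h : M) (n : ℕ) :
    (Δ_[h])^[n] (0 : M → G) = 0 :=
  iterate_fixed (fwdDiff_zero h) n

lemma fwdDiff_ibinom_succ (δ : ℕ) : Δ_[1] (ibinom · (δ + 1)) = (ibinom · δ) := by
  ext x
  simp [fwdDiff, ibinom, Ring.choose_succ_succ]

variable {B C : Type*} [AddCommGroup B] [AddCommGroup C]

lemma fwdDiff_iter_ibinom_smul_eq_zero {δ n : ℕ} (h : δ < n) (b : B) :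
    (Δ_[1])^[n] (fun x => ibinom x δ • b) = 0 := by
  induction δ generalizing n with
  | zero =>
    obtain ⟨n, rfl⟩ := Nat.exists_eq_add_of_lt h
    simp only [ibinom, Ring.choose_zero_right, iterate_succ_apply, fwdDiff_const]
    exact fwdDiff_iter_zero (G := B) (1 : ℤ) _
  | succ δ ih =>
    obtain ⟨n, rfl⟩ := Nat.exists_eq_add_of_le' (Nat.one_le_of_lt h)
    rw [iterate_succ_apply, fwdDiff_smul_const, fwdDiff_ibinom_succ]
    exact ih (by omega)

def IsPolyfractal (f : ℤ → B) : Prop :=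
  ∃ c : ℕ →₀ B, ∀ x, f x = c.sum fun δ b => ibinom x δ • b

namespace IsPolyfractal

lemma exists_fwdDiff_iter_eq_zero {f : ℤ → B} (hf : IsPolyfractal f) :
    ∃ N, (Δ_[1])^[N] f = 0 := by
  obtain ⟨c, hc⟩ := hf
  refine ⟨c.support.sup id + 1, ?_⟩
  have hsum : f = ∑ δ ∈ c.support, fun x => ibinom x δ • c δ := by
    ext x; simp [hc x, Finsupp.sum]
  rw [hsum, fwdDiff_iter_finsetSum]
  exact sum_eq_zero fun δ hδ =>
    fwdDiff_iter_ibinom_smul_eq_zero (Nat.lt_succ_of_le (le_sup (f := id) hδ)) _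

lemma map {f : ℤ → B} (hf : IsPolyfractal f) (φ : B →+ C) : IsPolyfractal (φ ∘ f) := by
  obtain ⟨c, hc⟩ := hf
  refine ⟨c.mapRange φ φ.map_zero, fun x => ?_⟩
  simp [hc x, Finsupp.sum_mapRange_index, map_finsuppSum]

lemma add {f g : ℤ → B} (hf : IsPolyfractal f) (hg : IsPolyfractal g) :
    IsPolyfractal (f + g) := by
  obtain ⟨c, hc⟩ := hf
  obtain ⟨d, hd⟩ := hg
  refine ⟨c + d, fun x => ?_⟩
  rw [Finsupp.sum_add_index' (fun _ => smul_zero _) (fun _ => smul_add _), Pi.add_apply, hc, hd]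

lemma prodMk {f : ℤ → B} {g : ℤ → C} (hf : IsPolyfractal f) (hg : IsPolyfractal g) :
    IsPolyfractal fun x => (f x, g x) := by
  convert (hf.map (.inl B C)).add (hg.map (.inr B C)) using 1
  ext x <;> simp

end IsPolyfractal

lemma eq_zero_of_sum_shift_eq_zero {m : ℕ} (hm : IsSMulRegular B m) (q : ℤ) {N : ℕ}
    {g : ℤ → B} (hN : (Δ_[1])^[N] g = 0) (hg : ∀ x, ∑ i ∈ range m, g (x + i * q) = 0) :
    g = 0 := by
  induction N generalizing g with
  | zero => exact hN
  | succ N ih =>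
    have hconst : Δ_[1] g = 0 := ih hN fun x => by
      simp only [fwdDiff, sum_sub_distrib, add_right_comm _ _ (1 : ℤ), hg, sub_self]
    have hper : Periodic g 1 := fun x => sub_eq_zero.mp (congrFun hconst x)
    ext x
    refine hm (?_ : m • g x = m • 0)
    rw [smul_zero, ← hg x]
    have hshift (i : ℕ) : g (x + i * q) = g x := by simpa using hper.int_mul (i * q) x
    simp [hshift]

theorem Function.Periodic.of_nat_mul_of_fwdDiff_iter_eq_zero {f : ℤ → B} {m N : ℕ} {q : ℤ}
    (hm : IsSMulRegular B m) (hN : (Δ_[1])^[N] f = 0) (hf : Periodic f (m * q)) :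
    Periodic f q := by
  have hdiff : Δ_[q] f = 0 := by
    refine eq_zero_of_sum_shift_eq_zero hm q (N := N) ?_ fun x => ?_
    · rw [fwdDiff_iter_fwdDiff_comm, hN, fwdDiff_zero]
    · have := sum_range_sub (fun i : ℕ => f (x + i * q)) m
      simpa only [fwdDiff, Nat.cast_succ, add_one_mul, ← add_assoc, hf x, Nat.cast_zero, zero_mul,
        add_zero, sub_self] using this
  exact fun x => sub_eq_zero.mp (congrFun hdiff x)

lemma ZMod.isSMulRegular_of_coprime {q r : ℕ} (h : q.Coprime r) : IsSMulRegular (ZMod r) q := by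
  have hu : IsUnit (q : ZMod r) := (ZMod.isUnit_iff_coprime q r).mpr h
  intro a b hab
  simp only [nsmul_eq_mul] at hab
  exact hu.mul_left_cancel hab

theorem stmt_18_general (r₁ r₂ q₁ q₂ : ℕ)
    (hco₁ : Nat.Coprime q₁ r₂) (hco₂ : Nat.Coprime q₂ r₁) :
    (∀ f : ℤ → ZMod r₁ × ZMod r₂,
      (∃ c : ℕ →₀ ZMod r₁ × ZMod r₂,
        ∀ x : ℤ, f x = c.sum fun δ b => ibinom x δ • b) →
      (∀ x : ℤ, f (x + (q₁ * q₂ : ℕ)) = f x) →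
      (∀ x : ℤ, (f (x + (q₁ : ℕ))).1 = (f x).1) ∧
        (∀ x : ℤ, (f (x + (q₂ : ℕ))).2 = (f x).2)) ∧
    (∀ (g₁ : ℤ → ZMod r₁) (g₂ : ℤ → ZMod r₂),
      (∃ c₁ : ℕ →₀ ZMod r₁, ∀ x : ℤ, g₁ x = c₁.sum fun δ a => ibinom x δ • a) →
      (∀ x : ℤ, g₁ (x + (q₁ : ℕ)) = g₁ x) →
      (∃ c₂ : ℕ →₀ ZMod r₂, ∀ x : ℤ, g₂ x = c₂.sum fun δ a => ibinom x δ • a) →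
      (∀ x : ℤ, g₂ (x + (q₂ : ℕ)) = g₂ x) →
      (∃ c : ℕ →₀ ZMod r₁ × ZMod r₂,
        ∀ x : ℤ, (g₁ x, g₂ x) = c.sum fun δ b => ibinom x δ • b) ∧
        (∀ x : ℤ, (g₁ (x + (q₁ * q₂ : ℕ)), g₂ (x + (q₁ * q₂ : ℕ))) = (g₁ x, g₂ x))) := by
  refine ⟨fun f hf hper => ⟨?_, ?_⟩,
    fun g₁ g₂ hg₁ hp₁ hg₂ hp₂ => ⟨IsPolyfractal.prodMk hg₁ hg₂, ?_⟩⟩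
  · obtain ⟨N, hN⟩ := (IsPolyfractal.map hf (.fst _ _)).exists_fwdDiff_iter_eq_zero
    refine Periodic.of_nat_mul_of_fwdDiff_iter_eq_zero (m := q₂)
      (ZMod.isSMulRegular_of_coprime hco₂) hN fun x => ?_
    simp only [comp_apply, AddMonoidHom.coe_fst]
    rw [mul_comm, ← Nat.cast_mul, hper]
  · obtain ⟨N, hN⟩ := (IsPolyfractal.map hf (.snd _ _)).exists_fwdDiff_iter_eq_zero
    refine Periodic.of_nat_mul_of_fwdDiff_iter_eq_zero (m := q₁)
      (ZMod.isSMulRegular_of_coprime hco₁) hN fun x => ?_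
    simp only [comp_apply, AddMonoidHom.coe_snd]
    rw [← Nat.cast_mul, hper]
  · have h₁ : Periodic g₁ (q₁ * q₂ : ℕ) := by simpa [mul_comm] using Periodic.nat_mul hp₁ q₂
    have h₂ : Periodic g₂ (q₁ * q₂ : ℕ) := by simpa using Periodic.nat_mul hp₂ q₁
    exact fun x => by rw [h₁ x, h₂ x]

/-- Splitting variables: with `q₁` coprime to `r₂` and `q₂` coprime to `r₁`,
(a) the components of a `q₁q₂`-periodic polyfractal map `ℤ → ZMod r₁ × ZMod r₂` are
`q₁`-periodic, resp. `q₂`-periodic; (b) conversely, a pair of a `q₁`-periodic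
polyfractal map into `ZMod r₁` and a `q₂`-periodic polyfractal map into `ZMod r₂`
combines to a `q₁q₂`-periodic polyfractal map. -/
theorem stmt_18 (r₁ r₂ q₁ q₂ : ℕ) (hr₁ : 2 ≤ r₁) (hr₂ : 2 ≤ r₂)
    (hq₁ : 1 ≤ q₁) (hq₂ : 1 ≤ q₂)
    (hco₁ : Nat.Coprime q₁ r₂) (hco₂ : Nat.Coprime q₂ r₁) :
    (∀ f : ℤ → ZMod r₁ × ZMod r₂,
      (∃ c : ℕ →₀ ZMod r₁ × ZMod r₂,
        ∀ x : ℤ, f x = c.sum fun δ b => ibinom x δ • b) →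
      (∀ x : ℤ, f (x + (q₁ * q₂ : ℕ)) = f x) →
      (∀ x : ℤ, (f (x + (q₁ : ℕ))).1 = (f x).1) ∧
        (∀ x : ℤ, (f (x + (q₂ : ℕ))).2 = (f x).2)) ∧
    (∀ (g₁ : ℤ → ZMod r₁) (g₂ : ℤ → ZMod r₂),
      (∃ c₁ : ℕ →₀ ZMod r₁, ∀ x : ℤ, g₁ x = c₁.sum fun δ a => ibinom x δ • a) →
      (∀ x : ℤ, g₁ (x + (q₁ : ℕ)) = g₁ x) →
      (∃ c₂ : ℕ →₀ ZMod r₂, ∀ x : ℤ, g₂ x = c₂.sum fun δ a => ibinom x δ • a) →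
      (∀ x : ℤ, g₂ (x + (q₂ : ℕ)) = g₂ x) →
      (∃ c : ℕ →₀ ZMod r₁ × ZMod r₂,
        ∀ x : ℤ, (g₁ x, g₂ x) = c.sum fun δ b => ibinom x δ • b) ∧
        (∀ x : ℤ, (g₁ (x + (q₁ * q₂ : ℕ)), g₂ (x + (q₁ * q₂ : ℕ))) = (g₁ x, g₂ x))) :=
  stmt_18_general r₁ r₂ q₁ q₂ hco₁ hco₂
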